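/- For every real λ, the real Lie subalgebra 𝔧_λ = { t(1+iλ)·Id + A : t ∈ ℝ, A ∈ 𝔰𝔲(2) } of End_ℝ(ℂ²) (the Lie algebra of H = J_λ·SU(2) ⊂ GL(2,ℂ) with J_λ = {e^{(1+iλ)t}}) satisfies: K(𝔧_λ) has real dimension 8. -/

import Mathlib

set_option synthInstance.maxHeartbeats 1000000
set_option maxHeartbeats 4000000

open scoped Matrix

noncomputable section

/-- A 2×2 complex matrix, regarded as a real-linear endomorphism of `ℂ²`. -/
def toEndR : Matrix (Fin 2) (Fin 2) ℂ →ₗ[ℝ] Module.End ℝ (Fin 2 → ℂ) where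
  toFun M :=
    { toFun := M.mulVec
      map_add' := fun x y => Matrix.mulVec_add M x y
      map_smul' := fun c x => M.mulVec_smul c x }
  map_add' M N := LinearMap.ext fun v => Matrix.add_mulVec M N v
  map_smul' c M := LinearMap.ext fun v => Matrix.smul_mulVec c M v

lemma smul_fact (c t : ℝ) (z : ℂ) :
    ((((c * t : ℝ)) : ℂ) * z) • (1 : Matrix (Fin 2) (Fin 2) ℂ)
      = c • ((((t : ℝ) : ℂ) * z) • (1 : Matrix (Fin 2) (Fin 2) ℂ)) := by
  have h : (((c * t : ℝ)) : ℂ) * z = c • ((((t : ℝ)) : ℂ) * z) := by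
    rw [Complex.real_smul]
    push_cast
    ring
  rw [h, smul_assoc]

/-- The Lie algebra `𝔧_λ` of `J_λ · SU(2)` acting on `ℂ²`:
all endomorphisms of the form `t(1 + iλ)·Id + A` with `t ∈ ℝ` and `A ∈ 𝔰𝔲(2)`. -/
def jlam (l : ℝ) : Submodule ℝ (Module.End ℝ (Fin 2 → ℂ)) where
  carrier := {E | ∃ (t : ℝ) (A : Matrix (Fin 2) (Fin 2) ℂ), A.trace = 0 ∧ Aᴴ = -A ∧
    E = toEndR (((t : ℂ) * (1 + Complex.I * (l : ℂ))) • (1 : Matrix (Fin 2) (Fin 2) ℂ) + A)}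
  zero_mem' := by
    refine ⟨0, 0, by simp, by simp, ?_⟩
    simp
  add_mem' := by
    rintro E F ⟨t, A, hA, hAH, rfl⟩ ⟨s, B, hB, hBH, rfl⟩
    refine ⟨t + s, A + B, by simp [Matrix.trace_add, hA, hB], ?_, ?_⟩
    · rw [Matrix.conjTranspose_add, hAH, hBH]
      abel
    · have hM : ((((t + s : ℝ)) : ℂ) * (1 + Complex.I * (l : ℂ))) • (1 : Matrix (Fin 2) (Fin 2) ℂ)
          + (A + B)
          = (((((t : ℝ)) : ℂ) * (1 + Complex.I * (l : ℂ))) • (1 : Matrix (Fin 2) (Fin 2) ℂ) + A)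
            + (((((s : ℝ)) : ℂ) * (1 + Complex.I * (l : ℂ))) • (1 : Matrix (Fin 2) (Fin 2) ℂ) + B) := by
        push_cast
        rw [add_mul, add_smul]
        abel
      rw [hM]
      exact (map_add toEndR _ _).symm
  smul_mem' := by
    rintro c E ⟨t, A, hA, hAH, rfl⟩
    refine ⟨c * t, c • A, ?_, ?_, ?_⟩
    · rw [Matrix.trace_smul, hA, smul_zero]
    · have h1 : (c • A)ᴴ = c • Aᴴ := by
        ext i j
        simp [Matrix.conjTranspose_apply]
      rw [h1, hAH, smul_neg]
    · rw [smul_fact, ← smul_add]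
      exact (map_smul toEndR c _).symm

variable {m : Type*} [AddCommGroup m] [Module ℝ m]
/-- The curvature space `K(𝔥)`: alternating bilinear maps `R : 𝔪 × 𝔪 → 𝔥`
satisfying the first Bianchi identity. -/
def Kspace (h : Submodule ℝ (Module.End ℝ m)) :
    Submodule ℝ (m →ₗ[ℝ] m →ₗ[ℝ] Module.End ℝ m) where
  carrier := {R | (∀ x, R x x = 0) ∧ (∀ x y, R x y ∈ h) ∧
    ∀ x y z, R x y z + R y z x + R z x y = 0}
  zero_mem' := ⟨fun _ => by simp, fun _ _ => h.zero_mem, fun _ _ _ => by simp⟩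
  add_mem' := by
    rintro R S ⟨hR1, hR2, hR3⟩ ⟨hS1, hS2, hS3⟩
    refine ⟨fun x => ?_, fun x y => ?_, fun x y z => ?_⟩
    · simp [hR1 x, hS1 x]
    · simpa using h.add_mem (hR2 x y) (hS2 x y)
    · have h3 : (R x y z + R y z x + R z x y) + (S x y z + S y z x + S z x y) = 0 := by
        rw [hR3 x y z, hS3 x y z, add_zero]
      simp only [LinearMap.add_apply]
      rw [← h3]; abel
  smul_mem' := by
    rintro c R ⟨hR1, hR2, hR3⟩
    refine ⟨fun x => ?_, fun x y => ?_, fun x y z => ?_⟩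
    · simp [hR1 x]
    · simpa using h.smul_mem c (hR2 x y)
    · have h3 := hR3 x y z
      simp only [LinearMap.smul_apply]
      rw [← smul_add, ← smul_add, h3, smul_zero]


noncomputable instance instKspaceAddCommGroup {m : Type*} [AddCommGroup m] [Module ℝ m]
    (h : Submodule ℝ (Module.End ℝ m)) :
    AddCommGroup ↥(Kspace h) :=
  @Submodule.addCommGroup ℝ _ _ LinearMap.addCommGroup _ (Kspace h)

def bv : Fin 4 → (Fin 2 → ℂ)
  | 0 => ![1, 0]
  | 1 => ![Complex.I, 0]
  | 2 => ![0, 1]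
  | 3 => ![0, Complex.I]

lemma toEndR_apply (M : Matrix (Fin 2) (Fin 2) ℂ) (v : Fin 2 → ℂ) :
    toEndR M v = M.mulVec v := rfl

lemma bv_span (v : Fin 2 → ℂ) :
    v = (v 0).re • bv 0 + (v 0).im • bv 1 + (v 1).re • bv 2 + (v 1).im • bv 3 := by
  funext k
  fin_cases k <;> simp [bv, Complex.real_smul]

/-- the traceless skew-hermitian matrix with parameters a b c -/
def sk2 (a b c : ℝ) : Matrix (Fin 2) (Fin 2) ℂ :=
  !![(a:ℂ) * Complex.I, (b:ℂ) + (c:ℂ) * Complex.I;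
     -(b:ℂ) + (c:ℂ) * Complex.I, -((a:ℂ) * Complex.I)]

/-- general element of 𝔧_λ as a matrix -/
def jmat (l t a b c : ℝ) : Matrix (Fin 2) (Fin 2) ℂ :=
  ((t : ℂ) * (1 + Complex.I * (l : ℂ))) • (1 : Matrix (Fin 2) (Fin 2) ℂ) + sk2 a b c

lemma jmat_mem (l t a b c : ℝ) : toEndR (jmat l t a b c) ∈ jlam l := by
  refine ⟨t, sk2 a b c, ?_, ?_, rfl⟩
  · simp [Matrix.trace, Fin.sum_univ_two, sk2]
  · ext i j
    fin_cases i <;> fin_cases j <;>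
      simp [sk2, Matrix.conjTranspose_apply, Complex.ext_iff]
def cf : Fin 4 → (Fin 2 → ℂ) → ℝ
  | 0 => fun v => (v 0).re
  | 1 => fun v => (v 0).im
  | 2 => fun v => (v 1).re
  | 3 => fun v => (v 1).im

lemma cf_add (i : Fin 4) (x y : Fin 2 → ℂ) : cf i (x + y) = cf i x + cf i y := by
  fin_cases i <;> simp [cf]

lemma cf_smul (i : Fin 4) (r : ℝ) (x : Fin 2 → ℂ) : cf i (r • x) = r * cf i x := by
  fin_cases i <;> simp [cf, Complex.real_smul]

lemma cf_bv (i j : Fin 4) : cf i (bv j) = if i = j then 1 else 0 := by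
  fin_cases i <;> fin_cases j <;> simp [cf, bv]
/-- alternating bilinear map built from 6 coefficient pairs and 6 endomorphism values -/
def alt2 (W : Fin 4 → Fin 4 → Module.End ℝ (Fin 2 → ℂ)) :
    (Fin 2 → ℂ) →ₗ[ℝ] (Fin 2 → ℂ) →ₗ[ℝ] Module.End ℝ (Fin 2 → ℂ) :=
  LinearMap.mk₂ ℝ (fun x y =>
      (cf 0 x * cf 1 y - cf 1 x * cf 0 y) • W 0 1
    + (cf 0 x * cf 2 y - cf 2 x * cf 0 y) • W 0 2
    + (cf 0 x * cf 3 y - cf 3 x * cf 0 y) • W 0 3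
    + (cf 1 x * cf 2 y - cf 2 x * cf 1 y) • W 1 2
    + (cf 1 x * cf 3 y - cf 3 x * cf 1 y) • W 1 3
    + (cf 2 x * cf 3 y - cf 3 x * cf 2 y) • W 2 3)
    (fun x x' y => by simp only [cf_add]; module)
    (fun r x y => by simp only [cf_smul]; module)
    (fun x y y' => by simp only [cf_add]; module)
    (fun r x y => by simp only [cf_smul]; module)
lemma alt2_bv_01 (W : Fin 4 → Fin 4 → Module.End ℝ (Fin 2 → ℂ)) :
    alt2 W (bv 0) (bv 1) = W 0 1 := by
  simp [alt2, cf_bv]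
lemma alt2_bv_13 (W : Fin 4 → Fin 4 → Module.End ℝ (Fin 2 → ℂ)) :
    alt2 W (bv 1) (bv 3) = W 1 3 := by
  simp [alt2, cf_bv]
lemma alt2_bv_23 (W : Fin 4 → Fin 4 → Module.End ℝ (Fin 2 → ℂ)) :
    alt2 W (bv 2) (bv 3) = W 2 3 := by
  simp [alt2, cf_bv]
lemma alt2_self (W : Fin 4 → Fin 4 → Module.End ℝ (Fin 2 → ℂ)) (x : Fin 2 → ℂ) :
    alt2 W x x = 0 := by
  simp [alt2]; module
/-- parameter tables for the general solution -/
def Wsol (l p0 p1 p2 p3 p4 p5 p6 p7 : ℝ) : Fin 4 → Fin 4 → Module.End ℝ (Fin 2 → ℂ) :=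
  fun i j =>
    match i.1, j.1 with
    | 0, 1 =>
      toEndR (jmat l (-p4) (-2*l*p4 - p5) (-2*l*p0 - p6)
        (-2*l^2*p0 + 2*l*p1 - 2*l*p6 - p7))
    | 0, 2 => toEndR (jmat l p0 p1 p2 p3)
    | 0, 3 =>
      toEndR (jmat l (-l*p0 + p1 - p6) (-(1+l^2)*p0 + l*p1 - l*p6 - p7)
        (-p3 + p4) (p2 + l*p4 + p5))
    | 1, 2 =>
      toEndR (jmat l (l*p0 - p1 + p6) ((1+l^2)*p0 - l*p1 + l*p6 + p7)
        (p3 - p4) (-p2 - l*p4 - p5))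
    | 1, 3 => toEndR (jmat l p0 p1 p2 p3)
    | 2, 3 => toEndR (jmat l p4 p5 p6 p7)
    | _, _ => 0

def sol (l p0 p1 p2 p3 p4 p5 p6 p7 : ℝ) :
    (Fin 2 → ℂ) →ₗ[ℝ] (Fin 2 → ℂ) →ₗ[ℝ] Module.End ℝ (Fin 2 → ℂ) :=
  alt2 (Wsol l p0 p1 p2 p3 p4 p5 p6 p7)

lemma sol_mem_jlam (l p0 p1 p2 p3 p4 p5 p6 p7 : ℝ) (x y : Fin 2 → ℂ) :
    sol l p0 p1 p2 p3 p4 p5 p6 p7 x y ∈ jlam l := by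
  show alt2 _ x y ∈ jlam l
  rw [alt2]
  simp only [LinearMap.mk₂_apply]
  refine Submodule.add_mem _ (Submodule.add_mem _ (Submodule.add_mem _
    (Submodule.add_mem _ (Submodule.add_mem _
      (Submodule.smul_mem _ _ ?_) (Submodule.smul_mem _ _ ?_)) (Submodule.smul_mem _ _ ?_))
      (Submodule.smul_mem _ _ ?_)) (Submodule.smul_mem _ _ ?_)) (Submodule.smul_mem _ _ ?_) <;>
    exact jmat_mem l _ _ _ _
lemma sol_bianchi (l p0 p1 p2 p3 p4 p5 p6 p7 : ℝ) (x y z : Fin 2 → ℂ) :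
    sol l p0 p1 p2 p3 p4 p5 p6 p7 x y z + sol l p0 p1 p2 p3 p4 p5 p6 p7 y z x
      + sol l p0 p1 p2 p3 p4 p5 p6 p7 z x y = 0 := by
  funext k
  fin_cases k <;>
  · simp only [sol, alt2, Wsol, LinearMap.mk₂_apply, LinearMap.add_apply,
      LinearMap.smul_apply, Pi.add_apply, Pi.smul_apply, Pi.zero_apply, cf,
      toEndR_apply, jmat, sk2, Matrix.mulVec, dotProduct, Fin.sum_univ_two,
      Matrix.add_apply, Matrix.smul_apply, Matrix.one_apply, smul_eq_mul,
      Complex.real_smul, Matrix.cons_val', Matrix.cons_val_zero, Matrix.cons_val_one,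
      Matrix.head_cons, Matrix.head_fin_const, Matrix.empty_val',
      Matrix.cons_val_fin_one, Matrix.of_apply, Fin.coe_ofNat_eq_mod, Nat.reduceMod]
    norm_num
    apply Complex.ext <;>
      simp [Complex.add_re, Complex.add_im, Complex.mul_re, Complex.mul_im, ← Complex.ofReal_pow] <;>
      ring
lemma sol_mem_Kspace (l p0 p1 p2 p3 p4 p5 p6 p7 : ℝ) :
    sol l p0 p1 p2 p3 p4 p5 p6 p7 ∈ Kspace (jlam l) :=
  ⟨alt2_self _, sol_mem_jlam l p0 p1 p2 p3 p4 p5 p6 p7,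
    sol_bianchi l p0 p1 p2 p3 p4 p5 p6 p7⟩

/-- evaluation of a curvature-like tensor, as a linear functional -/
def evc (u v : Fin 2 → ℂ) (k : Fin 2) :
    ((Fin 2 → ℂ) →ₗ[ℝ] (Fin 2 → ℂ) →ₗ[ℝ] Module.End ℝ (Fin 2 → ℂ)) →ₗ[ℝ] ℂ where
  toFun R := R u v (bv 0) k
  map_add' R S := by simp
  map_smul' r R := by simp

def coordOne (l : ℝ) (u v : Fin 2 → ℂ) (j : Fin 4) :
    ((Fin 2 → ℂ) →ₗ[ℝ] (Fin 2 → ℂ) →ₗ[ℝ] Module.End ℝ (Fin 2 → ℂ)) →ₗ[ℝ] ℝ :=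
  match j.1 with
  | 0 => Complex.reLm ∘ₗ evc u v 0
  | 1 => Complex.imLm ∘ₗ evc u v 0 - l • (Complex.reLm ∘ₗ evc u v 0)
  | 2 => -(Complex.reLm ∘ₗ evc u v 1)
  | _ => Complex.imLm ∘ₗ evc u v 1

/-- the 8 free coordinates of a curvature tensor -/
def coordF (l : ℝ) :
    ((Fin 2 → ℂ) →ₗ[ℝ] (Fin 2 → ℂ) →ₗ[ℝ] Module.End ℝ (Fin 2 → ℂ)) →ₗ[ℝ] (Fin 8 → ℝ) :=
  LinearMap.pi (fun i : Fin 8 =>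
    if h : i.1 < 4 then coordOne l (bv 1) (bv 3) ⟨i.1, h⟩
    else coordOne l (bv 2) (bv 3) ⟨i.1 - 4, by omega⟩)

lemma coordF_sol (l p0 p1 p2 p3 p4 p5 p6 p7 : ℝ) :
    coordF l (sol l p0 p1 p2 p3 p4 p5 p6 p7) = ![p0, p1, p2, p3, p4, p5, p6, p7] := by
  funext i
  have h13 := alt2_bv_13 (Wsol l p0 p1 p2 p3 p4 p5 p6 p7)
  have h23 := alt2_bv_23 (Wsol l p0 p1 p2 p3 p4 p5 p6 p7)
  fin_cases i <;>
    simp only [coordF, LinearMap.pi_apply] <;>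
    norm_num <;>
    simp only [coordOne, evc, sol, h13, h23, LinearMap.coe_mk, AddHom.coe_mk,
      LinearMap.comp_apply, LinearMap.sub_apply, LinearMap.smul_apply,
      LinearMap.neg_apply, Complex.reLm_coe, Complex.imLm_coe, smul_eq_mul, Fin.coe_ofNat_eq_mod, Nat.reduceMod] <;>
    simp [Wsol, toEndR_apply, jmat, sk2, Matrix.mulVec, dotProduct,
      Fin.sum_univ_two, Matrix.one_apply, bv] <;>
    ring

lemma cancel_aux (l x : ℝ) (h : (1 + l^2) * x = 0) : x = 0 := by
  have h1 : (1:ℝ) + l^2 ≠ 0 := by positivity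
  exact (mul_eq_zero.mp h).resolve_left h1
set_option linter.unreachableTactic false in
lemma coordF_inj (l : ℝ)
    (R : (Fin 2 → ℂ) →ₗ[ℝ] (Fin 2 → ℂ) →ₗ[ℝ] Module.End ℝ (Fin 2 → ℂ))
    (hK : R ∈ Kspace (jlam l)) (h0 : coordF l R = 0) : R = 0 := by
  obtain ⟨hR1, hR2, hR3⟩ := hK
  have hanti : ∀ x y, R y x = -R x y := by
    intro x y
    have h := hR1 (x + y)
    simp only [map_add, LinearMap.add_apply, hR1, zero_add, add_zero] at h
    first | exact eq_neg_of_add_eq_zero_left h | exact eq_neg_of_add_eq_zero_right h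
  obtain ⟨t01, A01, htr01, hsk01, hE01⟩ := hR2 (bv 0) (bv 1)
  obtain ⟨t02, A02, htr02, hsk02, hE02⟩ := hR2 (bv 0) (bv 2)
  obtain ⟨t03, A03, htr03, hsk03, hE03⟩ := hR2 (bv 0) (bv 3)
  obtain ⟨t12, A12, htr12, hsk12, hE12⟩ := hR2 (bv 1) (bv 2)
  obtain ⟨t13, A13, htr13, hsk13, hE13⟩ := hR2 (bv 1) (bv 3)
  obtain ⟨t23, A23, htr23, hsk23, hE23⟩ := hR2 (bv 2) (bv 3)
  have Eq0 : (2) * (A01 0 0).re = 0 := by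
    have h := congrArg (fun M => (M 0 0).re) hsk01
    simp [Matrix.conjTranspose_apply] at h
    first | linear_combination h | linear_combination -h | linear_combination 2*h | linear_combination -2*h | linarith [h]
  have Eq1 : (2) * (A01 1 1).re = 0 := by
    have h := congrArg (fun M => (M 1 1).re) hsk01
    simp [Matrix.conjTranspose_apply] at h
    first | linear_combination h | linear_combination -h | linear_combination 2*h | linear_combination -2*h | linarith [h]
  have Eq2 : (1) * (A01 0 1).re + (1) * (A01 1 0).re = 0 := by
    have h := congrArg (fun M => (M 0 1).re) hsk01
    simp [Matrix.conjTranspose_apply] at h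
    first | linear_combination h | linear_combination -h | linear_combination 2*h | linear_combination -2*h | linarith [h]
  have Eq3 : (1) * (A01 0 1).im + ((-1)) * (A01 1 0).im = 0 := by
    have h := congrArg (fun M => (M 0 1).im) hsk01
    simp [Matrix.conjTranspose_apply] at h
    first | linear_combination h | linear_combination -h | linear_combination 2*h | linear_combination -2*h | linarith [h]
  have Eq4 : (1) * (A01 0 0).re + (1) * (A01 1 1).re = 0 := by
    have h := congrArg Complex.re htr01
    simp [Matrix.trace, Fin.sum_univ_two] at h
    first | linear_combination h | linear_combination -h | linear_combination 2*h | linear_combination -2*h | linarith [h]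
  have Eq5 : (1) * (A01 0 0).im + (1) * (A01 1 1).im = 0 := by
    have h := congrArg Complex.im htr01
    simp [Matrix.trace, Fin.sum_univ_two] at h
    first | linear_combination h | linear_combination -h | linear_combination 2*h | linear_combination -2*h | linarith [h]
  have Eq6 : (2) * (A02 0 0).re = 0 := by
    have h := congrArg (fun M => (M 0 0).re) hsk02
    simp [Matrix.conjTranspose_apply] at h
    first | linear_combination h | linear_combination -h | linear_combination 2*h | linear_combination -2*h | linarith [h]
  have Eq7 : (2) * (A02 1 1).re = 0 := by
    have h := congrArg (fun M => (M 1 1).re) hsk02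
    simp [Matrix.conjTranspose_apply] at h
    first | linear_combination h | linear_combination -h | linear_combination 2*h | linear_combination -2*h | linarith [h]
  have Eq8 : (1) * (A02 0 1).re + (1) * (A02 1 0).re = 0 := by
    have h := congrArg (fun M => (M 0 1).re) hsk02
    simp [Matrix.conjTranspose_apply] at h
    first | linear_combination h | linear_combination -h | linear_combination 2*h | linear_combination -2*h | linarith [h]
  have Eq9 : (1) * (A02 0 1).im + ((-1)) * (A02 1 0).im = 0 := by
    have h := congrArg (fun M => (M 0 1).im) hsk02
    simp [Matrix.conjTranspose_apply] at h
    first | linear_combination h | linear_combination -h | linear_combination 2*h | linear_combination -2*h | linarith [h]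
  have Eq10 : (1) * (A02 0 0).re + (1) * (A02 1 1).re = 0 := by
    have h := congrArg Complex.re htr02
    simp [Matrix.trace, Fin.sum_univ_two] at h
    first | linear_combination h | linear_combination -h | linear_combination 2*h | linear_combination -2*h | linarith [h]
  have Eq11 : (1) * (A02 0 0).im + (1) * (A02 1 1).im = 0 := by
    have h := congrArg Complex.im htr02
    simp [Matrix.trace, Fin.sum_univ_two] at h
    first | linear_combination h | linear_combination -h | linear_combination 2*h | linear_combination -2*h | linarith [h]
  have Eq12 : (2) * (A03 0 0).re = 0 := by
    have h := congrArg (fun M => (M 0 0).re) hsk03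
    simp [Matrix.conjTranspose_apply] at h
    first | linear_combination h | linear_combination -h | linear_combination 2*h | linear_combination -2*h | linarith [h]
  have Eq13 : (2) * (A03 1 1).re = 0 := by
    have h := congrArg (fun M => (M 1 1).re) hsk03
    simp [Matrix.conjTranspose_apply] at h
    first | linear_combination h | linear_combination -h | linear_combination 2*h | linear_combination -2*h | linarith [h]
  have Eq14 : (1) * (A03 0 1).re + (1) * (A03 1 0).re = 0 := by
    have h := congrArg (fun M => (M 0 1).re) hsk03
    simp [Matrix.conjTranspose_apply] at h
    first | linear_combination h | linear_combination -h | linear_combination 2*h | linear_combination -2*h | linarith [h]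
  have Eq15 : (1) * (A03 0 1).im + ((-1)) * (A03 1 0).im = 0 := by
    have h := congrArg (fun M => (M 0 1).im) hsk03
    simp [Matrix.conjTranspose_apply] at h
    first | linear_combination h | linear_combination -h | linear_combination 2*h | linear_combination -2*h | linarith [h]
  have Eq16 : (1) * (A03 0 0).re + (1) * (A03 1 1).re = 0 := by
    have h := congrArg Complex.re htr03
    simp [Matrix.trace, Fin.sum_univ_two] at h
    first | linear_combination h | linear_combination -h | linear_combination 2*h | linear_combination -2*h | linarith [h]
  have Eq17 : (1) * (A03 0 0).im + (1) * (A03 1 1).im = 0 := by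
    have h := congrArg Complex.im htr03
    simp [Matrix.trace, Fin.sum_univ_two] at h
    first | linear_combination h | linear_combination -h | linear_combination 2*h | linear_combination -2*h | linarith [h]
  have Eq18 : (2) * (A12 0 0).re = 0 := by
    have h := congrArg (fun M => (M 0 0).re) hsk12
    simp [Matrix.conjTranspose_apply] at h
    first | linear_combination h | linear_combination -h | linear_combination 2*h | linear_combination -2*h | linarith [h]
  have Eq19 : (2) * (A12 1 1).re = 0 := by
    have h := congrArg (fun M => (M 1 1).re) hsk12
    simp [Matrix.conjTranspose_apply] at h
    first | linear_combination h | linear_combination -h | linear_combination 2*h | linear_combination -2*h | linarith [h]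
  have Eq20 : (1) * (A12 0 1).re + (1) * (A12 1 0).re = 0 := by
    have h := congrArg (fun M => (M 0 1).re) hsk12
    simp [Matrix.conjTranspose_apply] at h
    first | linear_combination h | linear_combination -h | linear_combination 2*h | linear_combination -2*h | linarith [h]
  have Eq21 : (1) * (A12 0 1).im + ((-1)) * (A12 1 0).im = 0 := by
    have h := congrArg (fun M => (M 0 1).im) hsk12
    simp [Matrix.conjTranspose_apply] at h
    first | linear_combination h | linear_combination -h | linear_combination 2*h | linear_combination -2*h | linarith [h]
  have Eq22 : (1) * (A12 0 0).re + (1) * (A12 1 1).re = 0 := by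
    have h := congrArg Complex.re htr12
    simp [Matrix.trace, Fin.sum_univ_two] at h
    first | linear_combination h | linear_combination -h | linear_combination 2*h | linear_combination -2*h | linarith [h]
  have Eq23 : (1) * (A12 0 0).im + (1) * (A12 1 1).im = 0 := by
    have h := congrArg Complex.im htr12
    simp [Matrix.trace, Fin.sum_univ_two] at h
    first | linear_combination h | linear_combination -h | linear_combination 2*h | linear_combination -2*h | linarith [h]
  have Eq24 : (2) * (A13 0 0).re = 0 := by
    have h := congrArg (fun M => (M 0 0).re) hsk13
    simp [Matrix.conjTranspose_apply] at h
    first | linear_combination h | linear_combination -h | linear_combination 2*h | linear_combination -2*h | linarith [h]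
  have Eq25 : (2) * (A13 1 1).re = 0 := by
    have h := congrArg (fun M => (M 1 1).re) hsk13
    simp [Matrix.conjTranspose_apply] at h
    first | linear_combination h | linear_combination -h | linear_combination 2*h | linear_combination -2*h | linarith [h]
  have Eq26 : (1) * (A13 0 1).re + (1) * (A13 1 0).re = 0 := by
    have h := congrArg (fun M => (M 0 1).re) hsk13
    simp [Matrix.conjTranspose_apply] at h
    first | linear_combination h | linear_combination -h | linear_combination 2*h | linear_combination -2*h | linarith [h]
  have Eq27 : (1) * (A13 0 1).im + ((-1)) * (A13 1 0).im = 0 := by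
    have h := congrArg (fun M => (M 0 1).im) hsk13
    simp [Matrix.conjTranspose_apply] at h
    first | linear_combination h | linear_combination -h | linear_combination 2*h | linear_combination -2*h | linarith [h]
  have Eq28 : (1) * (A13 0 0).re + (1) * (A13 1 1).re = 0 := by
    have h := congrArg Complex.re htr13
    simp [Matrix.trace, Fin.sum_univ_two] at h
    first | linear_combination h | linear_combination -h | linear_combination 2*h | linear_combination -2*h | linarith [h]
  have Eq29 : (1) * (A13 0 0).im + (1) * (A13 1 1).im = 0 := by
    have h := congrArg Complex.im htr13
    simp [Matrix.trace, Fin.sum_univ_two] at h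
    first | linear_combination h | linear_combination -h | linear_combination 2*h | linear_combination -2*h | linarith [h]
  have Eq30 : (2) * (A23 0 0).re = 0 := by
    have h := congrArg (fun M => (M 0 0).re) hsk23
    simp [Matrix.conjTranspose_apply] at h
    first | linear_combination h | linear_combination -h | linear_combination 2*h | linear_combination -2*h | linarith [h]
  have Eq31 : (2) * (A23 1 1).re = 0 := by
    have h := congrArg (fun M => (M 1 1).re) hsk23
    simp [Matrix.conjTranspose_apply] at h
    first | linear_combination h | linear_combination -h | linear_combination 2*h | linear_combination -2*h | linarith [h]
  have Eq32 : (1) * (A23 0 1).re + (1) * (A23 1 0).re = 0 := by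
    have h := congrArg (fun M => (M 0 1).re) hsk23
    simp [Matrix.conjTranspose_apply] at h
    first | linear_combination h | linear_combination -h | linear_combination 2*h | linear_combination -2*h | linarith [h]
  have Eq33 : (1) * (A23 0 1).im + ((-1)) * (A23 1 0).im = 0 := by
    have h := congrArg (fun M => (M 0 1).im) hsk23
    simp [Matrix.conjTranspose_apply] at h
    first | linear_combination h | linear_combination -h | linear_combination 2*h | linear_combination -2*h | linarith [h]
  have Eq34 : (1) * (A23 0 0).re + (1) * (A23 1 1).re = 0 := by
    have h := congrArg Complex.re htr23
    simp [Matrix.trace, Fin.sum_univ_two] at h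
    first | linear_combination h | linear_combination -h | linear_combination 2*h | linear_combination -2*h | linarith [h]
  have Eq35 : (1) * (A23 0 0).im + (1) * (A23 1 1).im = 0 := by
    have h := congrArg Complex.im htr23
    simp [Matrix.trace, Fin.sum_univ_two] at h
    first | linear_combination h | linear_combination -h | linear_combination 2*h | linear_combination -2*h | linarith [h]
  have hc012c0 : (A01 0 1) + ((t12:ℂ) * (1 + Complex.I * (l:ℂ)) + A12 0 0) + -(((t02:ℂ) * (1 + Complex.I * (l:ℂ)) + A02 0 0) * Complex.I) = 0 := by
    have h := congrFun (hR3 (bv 0) (bv 1) (bv 2)) 0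
    rw [hanti (bv 0) (bv 2)] at h
    rw [hE01, hE12, hE02] at h
    simp only [Pi.add_apply, Pi.zero_apply, LinearMap.neg_apply, Pi.neg_apply,
      toEndR_apply, Matrix.mulVec, dotProduct, Fin.sum_univ_two,
      Matrix.add_apply, Matrix.smul_apply, Matrix.one_apply, smul_eq_mul, bv,
      Matrix.cons_val_zero, Matrix.cons_val_one, Matrix.head_cons] at h
    norm_num at h
    first | linear_combination h | linear_combination -h
  have Eq36 : (1) * (A01 0 1).re + (1*l) * t02 + (1) * (A02 0 0).im + (1) * t12 + (1) * (A12 0 0).re = 0 := by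
    have h := congrArg Complex.re hc012c0
    simp at h
    first | linear_combination h | linear_combination -h | linear_combination 2*h | linear_combination -2*h | linarith [h]
  have Eq37 : (1) * (A01 0 1).im + ((-1)) * t02 + ((-1)) * (A02 0 0).re + (1*l) * t12 + (1) * (A12 0 0).im = 0 := by
    have h := congrArg Complex.im hc012c0
    simp at h
    first | linear_combination h | linear_combination -h | linear_combination 2*h | linear_combination -2*h | linarith [h]
  have hc012c1 : ((t01:ℂ) * (1 + Complex.I * (l:ℂ)) + A01 1 1) + (A12 1 0) + -((A02 1 0) * Complex.I) = 0 := by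
    have h := congrFun (hR3 (bv 0) (bv 1) (bv 2)) 1
    rw [hanti (bv 0) (bv 2)] at h
    rw [hE01, hE12, hE02] at h
    simp only [Pi.add_apply, Pi.zero_apply, LinearMap.neg_apply, Pi.neg_apply,
      toEndR_apply, Matrix.mulVec, dotProduct, Fin.sum_univ_two,
      Matrix.add_apply, Matrix.smul_apply, Matrix.one_apply, smul_eq_mul, bv,
      Matrix.cons_val_zero, Matrix.cons_val_one, Matrix.head_cons] at h
    norm_num at h
    first | linear_combination h | linear_combination -h
  have Eq38 : (1) * t01 + (1) * (A01 1 1).re + (1) * (A02 1 0).im + (1) * (A12 1 0).re = 0 := by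
    have h := congrArg Complex.re hc012c1
    simp at h
    first | linear_combination h | linear_combination -h | linear_combination 2*h | linear_combination -2*h | linarith [h]
  have Eq39 : (1*l) * t01 + (1) * (A01 1 1).im + ((-1)) * (A02 1 0).re + (1) * (A12 1 0).im = 0 := by
    have h := congrArg Complex.im hc012c1
    simp at h
    first | linear_combination h | linear_combination -h | linear_combination 2*h | linear_combination -2*h | linarith [h]
  have hc013c0 : (A01 0 1) * Complex.I + ((t13:ℂ) * (1 + Complex.I * (l:ℂ)) + A13 0 0) + -(((t03:ℂ) * (1 + Complex.I * (l:ℂ)) + A03 0 0) * Complex.I) = 0 := by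
    have h := congrFun (hR3 (bv 0) (bv 1) (bv 3)) 0
    rw [hanti (bv 0) (bv 3)] at h
    rw [hE01, hE13, hE03] at h
    simp only [Pi.add_apply, Pi.zero_apply, LinearMap.neg_apply, Pi.neg_apply,
      toEndR_apply, Matrix.mulVec, dotProduct, Fin.sum_univ_two,
      Matrix.add_apply, Matrix.smul_apply, Matrix.one_apply, smul_eq_mul, bv,
      Matrix.cons_val_zero, Matrix.cons_val_one, Matrix.head_cons] at h
    norm_num at h
    first | linear_combination h | linear_combination -h
  have Eq40 : ((-1)) * (A01 0 1).im + (1*l) * t03 + (1) * (A03 0 0).im + (1) * t13 + (1) * (A13 0 0).re = 0 := by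
    have h := congrArg Complex.re hc013c0
    simp at h
    first | linear_combination h | linear_combination -h | linear_combination 2*h | linear_combination -2*h | linarith [h]
  have Eq41 : (1) * (A01 0 1).re + ((-1)) * t03 + ((-1)) * (A03 0 0).re + (1*l) * t13 + (1) * (A13 0 0).im = 0 := by
    have h := congrArg Complex.im hc013c0
    simp at h
    first | linear_combination h | linear_combination -h | linear_combination 2*h | linear_combination -2*h | linarith [h]
  have hc013c1 : ((t01:ℂ) * (1 + Complex.I * (l:ℂ)) + A01 1 1) * Complex.I + (A13 1 0) + -((A03 1 0) * Complex.I) = 0 := by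
    have h := congrFun (hR3 (bv 0) (bv 1) (bv 3)) 1
    rw [hanti (bv 0) (bv 3)] at h
    rw [hE01, hE13, hE03] at h
    simp only [Pi.add_apply, Pi.zero_apply, LinearMap.neg_apply, Pi.neg_apply,
      toEndR_apply, Matrix.mulVec, dotProduct, Fin.sum_univ_two,
      Matrix.add_apply, Matrix.smul_apply, Matrix.one_apply, smul_eq_mul, bv,
      Matrix.cons_val_zero, Matrix.cons_val_one, Matrix.head_cons] at h
    norm_num at h
    first | linear_combination h | linear_combination -h
  have Eq42 : ((-1)*l) * t01 + ((-1)) * (A01 1 1).im + (1) * (A03 1 0).im + (1) * (A13 1 0).re = 0 := by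
    have h := congrArg Complex.re hc013c1
    simp at h
    first | linear_combination h | linear_combination -h | linear_combination 2*h | linear_combination -2*h | linarith [h]
  have Eq43 : (1) * t01 + (1) * (A01 1 1).re + ((-1)) * (A03 1 0).re + (1) * (A13 1 0).im = 0 := by
    have h := congrArg Complex.im hc013c1
    simp at h
    first | linear_combination h | linear_combination -h | linear_combination 2*h | linear_combination -2*h | linarith [h]
  have hc023c0 : (A02 0 1) * Complex.I + ((t23:ℂ) * (1 + Complex.I * (l:ℂ)) + A23 0 0) + -((A03 0 1)) = 0 := by
    have h := congrFun (hR3 (bv 0) (bv 2) (bv 3)) 0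
    rw [hanti (bv 0) (bv 3)] at h
    rw [hE02, hE23, hE03] at h
    simp only [Pi.add_apply, Pi.zero_apply, LinearMap.neg_apply, Pi.neg_apply,
      toEndR_apply, Matrix.mulVec, dotProduct, Fin.sum_univ_two,
      Matrix.add_apply, Matrix.smul_apply, Matrix.one_apply, smul_eq_mul, bv,
      Matrix.cons_val_zero, Matrix.cons_val_one, Matrix.head_cons] at h
    norm_num at h
    first | linear_combination h | linear_combination -h
  have Eq44 : ((-1)) * (A02 0 1).im + ((-1)) * (A03 0 1).re + (1) * t23 + (1) * (A23 0 0).re = 0 := by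
    have h := congrArg Complex.re hc023c0
    simp at h
    first | linear_combination h | linear_combination -h | linear_combination 2*h | linear_combination -2*h | linarith [h]
  have Eq45 : (1) * (A02 0 1).re + ((-1)) * (A03 0 1).im + (1*l) * t23 + (1) * (A23 0 0).im = 0 := by
    have h := congrArg Complex.im hc023c0
    simp at h
    first | linear_combination h | linear_combination -h | linear_combination 2*h | linear_combination -2*h | linarith [h]
  have hc023c1 : ((t02:ℂ) * (1 + Complex.I * (l:ℂ)) + A02 1 1) * Complex.I + (A23 1 0) + -(((t03:ℂ) * (1 + Complex.I * (l:ℂ)) + A03 1 1)) = 0 := by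
    have h := congrFun (hR3 (bv 0) (bv 2) (bv 3)) 1
    rw [hanti (bv 0) (bv 3)] at h
    rw [hE02, hE23, hE03] at h
    simp only [Pi.add_apply, Pi.zero_apply, LinearMap.neg_apply, Pi.neg_apply,
      toEndR_apply, Matrix.mulVec, dotProduct, Fin.sum_univ_two,
      Matrix.add_apply, Matrix.smul_apply, Matrix.one_apply, smul_eq_mul, bv,
      Matrix.cons_val_zero, Matrix.cons_val_one, Matrix.head_cons] at h
    norm_num at h
    first | linear_combination h | linear_combination -h
  have Eq46 : ((-1)*l) * t02 + ((-1)) * (A02 1 1).im + ((-1)) * t03 + ((-1)) * (A03 1 1).re + (1) * (A23 1 0).re = 0 := by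
    have h := congrArg Complex.re hc023c1
    simp at h
    first | linear_combination h | linear_combination -h | linear_combination 2*h | linear_combination -2*h | linarith [h]
  have Eq47 : (1) * t02 + (1) * (A02 1 1).re + ((-1)*l) * t03 + ((-1)) * (A03 1 1).im + (1) * (A23 1 0).im = 0 := by
    have h := congrArg Complex.im hc023c1
    simp at h
    first | linear_combination h | linear_combination -h | linear_combination 2*h | linear_combination -2*h | linarith [h]
  have hc123c0 : (A12 0 1) * Complex.I + ((t23:ℂ) * (1 + Complex.I * (l:ℂ)) + A23 0 0) * Complex.I + -((A13 0 1)) = 0 := by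
    have h := congrFun (hR3 (bv 1) (bv 2) (bv 3)) 0
    rw [hanti (bv 1) (bv 3)] at h
    rw [hE12, hE23, hE13] at h
    simp only [Pi.add_apply, Pi.zero_apply, LinearMap.neg_apply, Pi.neg_apply,
      toEndR_apply, Matrix.mulVec, dotProduct, Fin.sum_univ_two,
      Matrix.add_apply, Matrix.smul_apply, Matrix.one_apply, smul_eq_mul, bv,
      Matrix.cons_val_zero, Matrix.cons_val_one, Matrix.head_cons] at h
    norm_num at h
    first | linear_combination h | linear_combination -h
  have Eq48 : ((-1)) * (A12 0 1).im + ((-1)) * (A13 0 1).re + ((-1)*l) * t23 + ((-1)) * (A23 0 0).im = 0 := by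
    have h := congrArg Complex.re hc123c0
    simp at h
    first | linear_combination h | linear_combination -h | linear_combination 2*h | linear_combination -2*h | linarith [h]
  have Eq49 : (1) * (A12 0 1).re + ((-1)) * (A13 0 1).im + (1) * t23 + (1) * (A23 0 0).re = 0 := by
    have h := congrArg Complex.im hc123c0
    simp at h
    first | linear_combination h | linear_combination -h | linear_combination 2*h | linear_combination -2*h | linarith [h]
  have hc123c1 : ((t12:ℂ) * (1 + Complex.I * (l:ℂ)) + A12 1 1) * Complex.I + (A23 1 0) * Complex.I + -(((t13:ℂ) * (1 + Complex.I * (l:ℂ)) + A13 1 1)) = 0 := by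
    have h := congrFun (hR3 (bv 1) (bv 2) (bv 3)) 1
    rw [hanti (bv 1) (bv 3)] at h
    rw [hE12, hE23, hE13] at h
    simp only [Pi.add_apply, Pi.zero_apply, LinearMap.neg_apply, Pi.neg_apply,
      toEndR_apply, Matrix.mulVec, dotProduct, Fin.sum_univ_two,
      Matrix.add_apply, Matrix.smul_apply, Matrix.one_apply, smul_eq_mul, bv,
      Matrix.cons_val_zero, Matrix.cons_val_one, Matrix.head_cons] at h
    norm_num at h
    first | linear_combination h | linear_combination -h
  have Eq50 : ((-1)*l) * t12 + ((-1)) * (A12 1 1).im + ((-1)) * t13 + ((-1)) * (A13 1 1).re + ((-1)) * (A23 1 0).im = 0 := by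
    have h := congrArg Complex.re hc123c1
    simp at h
    first | linear_combination h | linear_combination -h | linear_combination 2*h | linear_combination -2*h | linarith [h]
  have Eq51 : (1) * t12 + (1) * (A12 1 1).re + ((-1)*l) * t13 + ((-1)) * (A13 1 1).im + (1) * (A23 1 0).re = 0 := by
    have h := congrArg Complex.im hc123c1
    simp at h
    first | linear_combination h | linear_combination -h | linear_combination 2*h | linear_combination -2*h | linarith [h]
  have Eq52 : (1) * t13 + (1) * (A13 0 0).re = 0 := by
    have h := congrFun h0 ⟨0, by norm_num⟩
    simp only [coordF, LinearMap.pi_apply, coordOne, evc, LinearMap.comp_apply,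
      LinearMap.coe_mk, AddHom.coe_mk, LinearMap.sub_apply, LinearMap.smul_apply,
      LinearMap.neg_apply, Complex.reLm_coe, Complex.imLm_coe, smul_eq_mul,
      Pi.zero_apply] at h
    norm_num at h
    rw [hE13] at h
    simp [toEndR_apply, Matrix.mulVec, dotProduct, Fin.sum_univ_two,
      Matrix.one_apply, bv] at h
    first | linear_combination h | linear_combination -h | linear_combination 2*h | linear_combination -2*h | linarith [h]
  have Eq53 : ((-1)*l) * (A13 0 0).re + (1) * (A13 0 0).im = 0 := by
    have h := congrFun h0 ⟨1, by norm_num⟩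
    simp only [coordF, LinearMap.pi_apply, coordOne, evc, LinearMap.comp_apply,
      LinearMap.coe_mk, AddHom.coe_mk, LinearMap.sub_apply, LinearMap.smul_apply,
      LinearMap.neg_apply, Complex.reLm_coe, Complex.imLm_coe, smul_eq_mul,
      Pi.zero_apply] at h
    norm_num at h
    rw [hE13] at h
    simp [toEndR_apply, Matrix.mulVec, dotProduct, Fin.sum_univ_two,
      Matrix.one_apply, bv] at h
    first | linear_combination h | linear_combination -h | linear_combination 2*h | linear_combination -2*h | linarith [h]
  have Eq54 : ((-1)) * (A13 1 0).re = 0 := by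
    have h := congrFun h0 ⟨2, by norm_num⟩
    simp only [coordF, LinearMap.pi_apply, coordOne, evc, LinearMap.comp_apply,
      LinearMap.coe_mk, AddHom.coe_mk, LinearMap.sub_apply, LinearMap.smul_apply,
      LinearMap.neg_apply, Complex.reLm_coe, Complex.imLm_coe, smul_eq_mul,
      Pi.zero_apply] at h
    norm_num at h
    rw [hE13] at h
    simp [toEndR_apply, Matrix.mulVec, dotProduct, Fin.sum_univ_two,
      Matrix.one_apply, bv] at h
    first | linear_combination h | linear_combination -h | linear_combination 2*h | linear_combination -2*h | linarith [h]
  have Eq55 : (1) * (A13 1 0).im = 0 := by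
    have h := congrFun h0 ⟨3, by norm_num⟩
    simp only [coordF, LinearMap.pi_apply, coordOne, evc, LinearMap.comp_apply,
      LinearMap.coe_mk, AddHom.coe_mk, LinearMap.sub_apply, LinearMap.smul_apply,
      LinearMap.neg_apply, Complex.reLm_coe, Complex.imLm_coe, smul_eq_mul,
      Pi.zero_apply] at h
    norm_num at h
    rw [hE13] at h
    simp [toEndR_apply, Matrix.mulVec, dotProduct, Fin.sum_univ_two,
      Matrix.one_apply, bv] at h
    first | linear_combination h | linear_combination -h | linear_combination 2*h | linear_combination -2*h | linarith [h]
  have Eq56 : (1) * t23 + (1) * (A23 0 0).re = 0 := by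
    have h := congrFun h0 ⟨4, by norm_num⟩
    simp only [coordF, LinearMap.pi_apply, coordOne, evc, LinearMap.comp_apply,
      LinearMap.coe_mk, AddHom.coe_mk, LinearMap.sub_apply, LinearMap.smul_apply,
      LinearMap.neg_apply, Complex.reLm_coe, Complex.imLm_coe, smul_eq_mul,
      Pi.zero_apply] at h
    norm_num at h
    rw [hE23] at h
    simp [toEndR_apply, Matrix.mulVec, dotProduct, Fin.sum_univ_two,
      Matrix.one_apply, bv] at h
    first | linear_combination h | linear_combination -h | linear_combination 2*h | linear_combination -2*h | linarith [h]
  have Eq57 : ((-1)*l) * (A23 0 0).re + (1) * (A23 0 0).im = 0 := by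
    have h := congrFun h0 ⟨5, by norm_num⟩
    simp only [coordF, LinearMap.pi_apply, coordOne, evc, LinearMap.comp_apply,
      LinearMap.coe_mk, AddHom.coe_mk, LinearMap.sub_apply, LinearMap.smul_apply,
      LinearMap.neg_apply, Complex.reLm_coe, Complex.imLm_coe, smul_eq_mul,
      Pi.zero_apply] at h
    norm_num at h
    rw [hE23] at h
    simp [toEndR_apply, Matrix.mulVec, dotProduct, Fin.sum_univ_two,
      Matrix.one_apply, bv] at h
    first | linear_combination h | linear_combination -h | linear_combination 2*h | linear_combination -2*h | linarith [h]
  have Eq58 : ((-1)) * (A23 1 0).re = 0 := by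
    have h := congrFun h0 ⟨6, by norm_num⟩
    simp only [coordF, LinearMap.pi_apply, coordOne, evc, LinearMap.comp_apply,
      LinearMap.coe_mk, AddHom.coe_mk, LinearMap.sub_apply, LinearMap.smul_apply,
      LinearMap.neg_apply, Complex.reLm_coe, Complex.imLm_coe, smul_eq_mul,
      Pi.zero_apply] at h
    norm_num at h
    rw [hE23] at h
    simp [toEndR_apply, Matrix.mulVec, dotProduct, Fin.sum_univ_two,
      Matrix.one_apply, bv] at h
    first | linear_combination h | linear_combination -h | linear_combination 2*h | linear_combination -2*h | linarith [h]
  have Eq59 : (1) * (A23 1 0).im = 0 := by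
    have h := congrFun h0 ⟨7, by norm_num⟩
    simp only [coordF, LinearMap.pi_apply, coordOne, evc, LinearMap.comp_apply,
      LinearMap.coe_mk, AddHom.coe_mk, LinearMap.sub_apply, LinearMap.smul_apply,
      LinearMap.neg_apply, Complex.reLm_coe, Complex.imLm_coe, smul_eq_mul,
      Pi.zero_apply] at h
    norm_num at h
    rw [hE23] at h
    simp [toEndR_apply, Matrix.mulVec, dotProduct, Fin.sum_univ_two,
      Matrix.one_apply, bv] at h
    first | linear_combination h | linear_combination -h | linear_combination 2*h | linear_combination -2*h | linarith [h]
  have z0 : t01 = 0 := cancel_aux l _ (by linear_combination ((-1/2) + (-1/2)*l^2) * Eq1 + ((1/2) + (1/2)*l^2) * Eq9 + ((1/2) + (1/2)*l^2) * Eq14 + ((-1/2) + (-1/2)*l^2) * Eq20 + ((1/2) + (1/2)*l^2) * Eq27 + ((1/2) + (1/2)*l^2) * Eq38 + ((1/2) + (1/2)*l^2) * Eq43 + ((1/2) + (1/2)*l^2) * Eq44 + ((1/2) + (1/2)*l^2) * Eq49 + ((-1) + (-1)*l^2) * Eq56)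
  have z1 : (A01 0 0).re = 0 := cancel_aux l _ (by linear_combination ((-1/2) + (-1/2)*l^2) * Eq1 + (1 + 1*l^2) * Eq4)
  have z2 : (A01 0 0).im = 0 := cancel_aux l _ (by linear_combination ((-1/2)*l + (-1/2)*l^3) * Eq1 + (1 + 1*l^2) * Eq5 + ((-1/2) + (-1/2)*l^2) * Eq8 + ((1/2)*l + (1/2)*l^3) * Eq9 + ((1/2)*l + (1/2)*l^3) * Eq14 + ((1/2) + (1/2)*l^2) * Eq15 + ((-1/2)*l + (-1/2)*l^3) * Eq20 + ((-1/2) + (-1/2)*l^2) * Eq21 + ((-1/2) + (-1/2)*l^2) * Eq26 + ((1/2)*l + (1/2)*l^3) * Eq27 + ((1/2)*l + (1/2)*l^3) * Eq38 + ((-1/2) + (-1/2)*l^2) * Eq39 + ((1/2) + (1/2)*l^2) * Eq42 + ((1/2)*l + (1/2)*l^3) * Eq43 + ((1/2)*l + (1/2)*l^3) * Eq44 + ((1/2) + (1/2)*l^2) * Eq45 + ((-1/2) + (-1/2)*l^2) * Eq48 + ((1/2)*l + (1/2)*l^3) * Eq49 + ((-2)*l + (-2)*l^3) * Eq56 + ((-1)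 + (-1)*l^2) * Eq57)
  have z3 : (A01 0 1).re = 0 := cancel_aux l _ (by linear_combination ((1/2)*l) * Eq10 + ((-1/2)) * Eq11 + ((1/2) + (1/2)*l^2) * Eq12 + ((-1/2)) * Eq16 + ((-1/2)*l) * Eq17 + ((1/2) + (1/2)*l^2) * Eq19 + ((-1/2)) * Eq22 + ((-1/2)*l) * Eq23 + (1*l + 1*l^3) * Eq24 + ((-1/2)*l) * Eq28 + ((-1/2) + (-1)*l^2) * Eq29 + ((1/2)) * Eq36 + ((1/2)*l) * Eq37 + ((1/2)*l) * Eq40 + ((1/2) + 1*l^2) * Eq41 + ((-1/2)) * Eq46 + ((-1/2)*l) * Eq47 + ((-1/2)*l) * Eq50 + ((-1/2) + (-1)*l^2) * Eq51 + ((-2)*l + (-2)*l^3) * Eq52 + ((-1) + (-1)*l^2) * Eq58)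
  have z4 : (A01 0 1).im = 0 := cancel_aux l _ (by linear_combination ((-1/2) + (-1/2)*l^2) * Eq7 + ((1/2) + 1*l^2) * Eq10 + ((-1/2)*l) * Eq11 + ((-1/2)*l) * Eq16 + ((1/2)) * Eq17 + (1*l + 1*l^3) * Eq19 + ((-1/2)*l) * Eq22 + ((-1/2) + (-1)*l^2) * Eq23 + ((1/2) + (5/2)*l^2 + 2*l^4) * Eq24 + ((-1/2) + (-1)*l^2) * Eq28 + ((-3/2)*l + (-2)*l^3) * Eq29 + ((1/2)*l) * Eq36 + ((1/2) + 1*l^2) * Eq37 + ((-1/2)) * Eq40 + ((-1/2)*l) * Eq41 + ((-1/2)*l) * Eq46 + ((1/2)) * Eq47 + ((-1/2) + (-1)*l^2) * Eq50 + ((-3/2)*l + (-2)*l^3) * Eq51 + ((-2)*l^2 + (-2)*l^4) * Eq52 + (2*l + 2*l^3) * Eq53 + ((-2)*l + (-2)*l^3) * Eq58 + ((-1) + (-1)*l^2) * Eq59)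
  have z5 : (A01 1 0).re = 0 := cancel_aux l _ (by linear_combination (1 + 1*l^2) * Eq2 + ((-1/2)*l) * Eq10 + ((1/2)) * Eq11 + ((-1/2) + (-1/2)*l^2) * Eq12 + ((1/2)) * Eq16 + ((1/2)*l) * Eq17 + ((-1/2) + (-1/2)*l^2) * Eq19 + ((1/2)) * Eq22 + ((1/2)*l) * Eq23 + ((-1)*l + (-1)*l^3) * Eq24 + ((1/2)*l) * Eq28 + ((1/2) + 1*l^2) * Eq29 + ((-1/2)) * Eq36 + ((-1/2)*l) * Eq37 + ((-1/2)*l) * Eq40 + ((-1/2) + (-1)*l^2) * Eq41 + ((1/2)) * Eq46 + ((1/2)*l) * Eq47 + ((1/2)*l) * Eq50 + ((1/2) + 1*l^2) * Eq51 + (2*l + 2*l^3) * Eq52 + (1 + 1*l^2) * Eq58)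
  have z6 : (A01 1 0).im = 0 := cancel_aux l _ (by linear_combination ((-1) + (-1)*l^2) * Eq3 + ((-1/2) + (-1/2)*l^2) * Eq7 + ((1/2) + 1*l^2) * Eq10 + ((-1/2)*l) * Eq11 + ((-1/2)*l) * Eq16 + ((1/2)) * Eq17 + (1*l + 1*l^3) * Eq19 + ((-1/2)*l) * Eq22 + ((-1/2) + (-1)*l^2) * Eq23 + ((1/2) + (5/2)*l^2 + 2*l^4) * Eq24 + ((-1/2) + (-1)*l^2) * Eq28 + ((-3/2)*l + (-2)*l^3) * Eq29 + ((1/2)*l) * Eq36 + ((1/2) + 1*l^2) * Eq37 + ((-1/2)) * Eq40 + ((-1/2)*l) * Eq41 + ((-1/2)*l) * Eq46 + ((1/2)) * Eq47 + ((-1/2) + (-1)*l^2) * Eq50 + ((-3/2)*l + (-2)*l^3) * Eq51 + ((-2)*l^2 + (-2)*l^4) * Eq52 + (2*l + 2*l^3) * Eq53 + ((-2)*l + (-2)*l^3) * Eq58 + ((-1) + (-1)*l^2) * Eq59)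
  have z7 : (A01 1 1).re = 0 := cancel_aux l _ (by linear_combination ((1/2) + (1/2)*l^2) * Eq1)
  have z8 : (A01 1 1).im = 0 := cancel_aux l _ (by linear_combination ((1/2)*l + (1/2)*l^3) * Eq1 + ((1/2) + (1/2)*l^2) * Eq8 + ((-1/2)*l + (-1/2)*l^3) * Eq9 + ((-1/2)*l + (-1/2)*l^3) * Eq14 + ((-1/2) + (-1/2)*l^2) * Eq15 + ((1/2)*l + (1/2)*l^3) * Eq20 + ((1/2) + (1/2)*l^2) * Eq21 + ((1/2) + (1/2)*l^2) * Eq26 + ((-1/2)*l + (-1/2)*l^3) * Eq27 + ((-1/2)*l + (-1/2)*l^3) * Eq38 + ((1/2) + (1/2)*l^2) * Eq39 + ((-1/2) + (-1/2)*l^2) * Eq42 + ((-1/2)*l + (-1/2)*l^3) * Eq43 + ((-1/2)*l + (-1/2)*l^3) * Eq44 + ((-1/2) + (-1/2)*l^2) * Eq45 + ((1/2) + (1/2)*l^2) * Eq48 + ((-1/2)*l + (-1/2)*l^3) * Eq49 + (2*l + 2*l^3) * Eq56 + (1 + 1*l^2) * Eq57)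
  have z9 : t02 = 0 := cancel_aux l _ (by linear_combination ((-1/2)) * Eq10 + ((-1/2)*l) * Eq11 + ((-1/2)*l) * Eq16 + ((1/2)) * Eq17 + ((-1/2)*l) * Eq22 + ((1/2)) * Eq23 + ((-1/2) + (-1/2)*l^2) * Eq24 + ((1/2)) * Eq28 + ((1/2)*l) * Eq29 + ((1/2)*l) * Eq36 + ((-1/2)) * Eq37 + ((-1/2)) * Eq40 + ((-1/2)*l) * Eq41 + ((-1/2)*l) * Eq46 + ((1/2)) * Eq47 + ((1/2)) * Eq50 + ((1/2)*l) * Eq51 + (1 + 1*l^2) * Eq52)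
  have z10 : (A02 0 0).re = 0 := cancel_aux l _ (by linear_combination ((-1/2) + (-1/2)*l^2) * Eq7 + (1 + 1*l^2) * Eq10)
  have z11 : (A02 0 0).im = 0 := cancel_aux l _ (by linear_combination ((1/2) + (1/2)*l^2) * Eq11 + ((-1/2) + (-1/2)*l^2) * Eq12 + ((1/2) + (1/2)*l^2) * Eq16 + ((1/2) + (1/2)*l^2) * Eq19 + ((-1/2) + (-1/2)*l^2) * Eq22 + ((1/2)*l + (1/2)*l^3) * Eq24 + ((-1/2) + (-1/2)*l^2) * Eq29 + ((1/2) + (1/2)*l^2) * Eq36 + ((-1/2) + (-1/2)*l^2) * Eq41 + ((1/2) + (1/2)*l^2) * Eq46 + ((-1/2) + (-1/2)*l^2) * Eq51 + (1 + 1*l^2) * Eq53)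
  have z12 : (A02 0 1).re = 0 := cancel_aux l _ (by linear_combination ((1/2) + (1/2)*l^2) * Eq8 + ((1/2) + (1/2)*l^2) * Eq15 + ((1/2) + (1/2)*l^2) * Eq21 + ((1/2) + (1/2)*l^2) * Eq26 + ((1/2) + (1/2)*l^2) * Eq39 + ((1/2) + (1/2)*l^2) * Eq42 + ((1/2) + (1/2)*l^2) * Eq45 + ((1/2) + (1/2)*l^2) * Eq48 + (1 + 1*l^2) * Eq54)
  have z13 : (A02 0 1).im = 0 := cancel_aux l _ (by linear_combination ((1/2) + (1/2)*l^2) * Eq9 + ((-1/2) + (-1/2)*l^2) * Eq14 + ((-1/2) + (-1/2)*l^2) * Eq20 + ((1/2) + (1/2)*l^2) * Eq27 + ((1/2) + (1/2)*l^2) * Eq38 + ((-1/2) + (-1/2)*l^2) * Eq43 + ((-1/2) + (-1/2)*l^2) * Eq44 + ((1/2) + (1/2)*l^2) * Eq49 + (1 + 1*l^2) * Eq55)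
  have z14 : (A02 1 0).re = 0 := cancel_aux l _ (by linear_combination ((1/2) + (1/2)*l^2) * Eq8 + ((-1/2) + (-1/2)*l^2) * Eq15 + ((-1/2) + (-1/2)*l^2) * Eq21 + ((-1/2) + (-1/2)*l^2) * Eq26 + ((-1/2) + (-1/2)*l^2) * Eq39 + ((-1/2) + (-1/2)*l^2) * Eq42 + ((-1/2) + (-1/2)*l^2) * Eq45 + ((-1/2) + (-1/2)*l^2) * Eq48 + ((-1) + (-1)*l^2) * Eq54)
  have z15 : (A02 1 0).im = 0 := cancel_aux l _ (by linear_combination ((-1/2) + (-1/2)*l^2) * Eq9 + ((-1/2) + (-1/2)*l^2) * Eq14 + ((-1/2) + (-1/2)*l^2) * Eq20 + ((1/2) + (1/2)*l^2) * Eq27 + ((1/2) + (1/2)*l^2) * Eq38 + ((-1/2) + (-1/2)*l^2) * Eq43 + ((-1/2) + (-1/2)*l^2) * Eq44 + ((1/2) + (1/2)*l^2) * Eq49 + (1 + 1*l^2) * Eq55)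
  have z16 : (A02 1 1).re = 0 := cancel_aux l _ (by linear_combination ((1/2) + (1/2)*l^2) * Eq7)
  have z17 : (A02 1 1).im = 0 := cancel_aux l _ (by linear_combination ((1/2) + (1/2)*l^2) * Eq11 + ((1/2) + (1/2)*l^2) * Eq12 + ((-1/2) + (-1/2)*l^2) * Eq16 + ((-1/2) + (-1/2)*l^2) * Eq19 + ((1/2) + (1/2)*l^2) * Eq22 + ((-1/2)*l + (-1/2)*l^3) * Eq24 + ((1/2) + (1/2)*l^2) * Eq29 + ((-1/2) + (-1/2)*l^2) * Eq36 + ((1/2) + (1/2)*l^2) * Eq41 + ((-1/2) + (-1/2)*l^2) * Eq46 + ((1/2) + (1/2)*l^2) * Eq51 + ((-1) + (-1)*l^2) * Eq53)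
  have z18 : t03 = 0 := cancel_aux l _ (by linear_combination ((1/2)*l) * Eq10 + ((-1/2)) * Eq11 + ((-1/2)) * Eq16 + ((-1/2)*l) * Eq17 + ((1/2) + (1/2)*l^2) * Eq19 + ((-1/2)) * Eq22 + ((-1/2)*l) * Eq23 + (1*l + 1*l^3) * Eq24 + ((-1/2)*l) * Eq28 + ((-1/2) + (-1)*l^2) * Eq29 + ((1/2)) * Eq36 + ((1/2)*l) * Eq37 + ((1/2)*l) * Eq40 + ((-1/2)) * Eq41 + ((-1/2)) * Eq46 + ((-1/2)*l) * Eq47 + ((-1/2)*l) * Eq50 + ((-1/2) + (-1)*l^2) * Eq51 + ((-1)*l + (-1)*l^3) * Eq52 + (1 + 1*l^2) * Eq53 + ((-1) + (-1)*l^2) * Eq58)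
  have z19 : (A03 0 0).re = 0 := cancel_aux l _ (by linear_combination ((1/2) + (1/2)*l^2) * Eq12)
  have z20 : (A03 0 0).im = 0 := cancel_aux l _ (by linear_combination ((-1/2) + (-1/2)*l^2) * Eq7 + ((1/2) + (1/2)*l^2) * Eq10 + ((1/2) + (1/2)*l^2) * Eq17 + ((1/2)*l + (1/2)*l^3) * Eq19 + ((-1/2) + (-1/2)*l^2) * Eq23 + ((1/2) + (3/2)*l^2 + 1*l^4) * Eq24 + ((-1/2) + (-1/2)*l^2) * Eq28 + ((-1)*l + (-1)*l^3) * Eq29 + ((1/2) + (1/2)*l^2) * Eq37 + ((1/2) + (1/2)*l^2) * Eq40 + ((1/2) + (1/2)*l^2) * Eq47 + ((-1/2) + (-1/2)*l^2) * Eq50 + ((-1)*l + (-1)*l^3) * Eq51 + ((-1) + (-2)*l^2 + (-1)*l^4) * Eq52 + (1*l + 1*l^3) * Eq53 + ((-1)*l + (-1)*l^3) * Eq58 + ((-1) + (-1)*l^2) * Eq59)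
  have z21 : (A03 0 1).re = 0 := cancel_aux l _ (by linear_combination ((-1/2) + (-1/2)*l^2) * Eq9 + ((1/2) + (1/2)*l^2) * Eq14 + ((1/2) + (1/2)*l^2) * Eq20 + ((-1/2) + (-1/2)*l^2) * Eq27 + ((-1/2) + (-1/2)*l^2) * Eq38 + ((1/2) + (1/2)*l^2) * Eq43 + ((-1/2) + (-1/2)*l^2) * Eq44 + ((-1/2) + (-1/2)*l^2) * Eq49 + ((-1) + (-1)*l^2) * Eq55 + (1 + 1*l^2) * Eq56)
  have z22 : (A03 0 1).im = 0 := cancel_aux l _ (by linear_combination ((1/2) + (1/2)*l^2) * Eq8 + ((1/2) + (1/2)*l^2) * Eq15 + ((1/2) + (1/2)*l^2) * Eq21 + ((1/2) + (1/2)*l^2) * Eq26 + ((1/2) + (1/2)*l^2) * Eq39 + ((1/2) + (1/2)*l^2) * Eq42 + ((-1/2) + (-1/2)*l^2) * Eq45 + ((1/2) + (1/2)*l^2) * Eq48 + (1 + 1*l^2) * Eq54 + (1*l + 1*l^3) * Eq56 + (1 + 1*l^2) * Eq57)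
  have z23 : (A03 1 0).re = 0 := cancel_aux l _ (by linear_combination ((1/2) + (1/2)*l^2) * Eq9 + ((1/2) + (1/2)*l^2) * Eq14 + ((-1/2) + (-1/2)*l^2) * Eq20 + ((1/2) + (1/2)*l^2) * Eq27 + ((1/2) + (1/2)*l^2) * Eq38 + ((-1/2) + (-1/2)*l^2) * Eq43 + ((1/2) + (1/2)*l^2) * Eq44 + ((1/2) + (1/2)*l^2) * Eq49 + (1 + 1*l^2) * Eq55 + ((-1) + (-1)*l^2) * Eq56)
  have z24 : (A03 1 0).im = 0 := cancel_aux l _ (by linear_combination ((1/2) + (1/2)*l^2) * Eq8 + ((-1/2) + (-1/2)*l^2) * Eq15 + ((1/2) + (1/2)*l^2) * Eq21 + ((1/2) + (1/2)*l^2) * Eq26 + ((1/2) + (1/2)*l^2) * Eq39 + ((1/2) + (1/2)*l^2) * Eq42 + ((-1/2) + (-1/2)*l^2) * Eq45 + ((1/2) + (1/2)*l^2) * Eq48 + (1 + 1*l^2) * Eq54 + (1*l + 1*l^3) * Eq56 + (1 + 1*l^2) * Eq57)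
  have z25 : (A03 1 1).re = 0 := cancel_aux l _ (by linear_combination ((-1/2) + (-1/2)*l^2) * Eq12 + (1 + 1*l^2) * Eq16)
  have z26 : (A03 1 1).im = 0 := cancel_aux l _ (by linear_combination ((1/2) + (1/2)*l^2) * Eq7 + ((-1/2) + (-1/2)*l^2) * Eq10 + ((1/2) + (1/2)*l^2) * Eq17 + ((-1/2)*l + (-1/2)*l^3) * Eq19 + ((1/2) + (1/2)*l^2) * Eq23 + ((-1/2) + (-3/2)*l^2 + (-1)*l^4) * Eq24 + ((1/2) + (1/2)*l^2) * Eq28 + (1*l + 1*l^3) * Eq29 + ((-1/2) + (-1/2)*l^2) * Eq37 + ((-1/2) + (-1/2)*l^2) * Eq40 + ((-1/2) + (-1/2)*l^2) * Eq47 + ((1/2) + (1/2)*l^2) * Eq50 + (1*l + 1*l^3) * Eq51 + (1 + 2*l^2 + 1*l^4) * Eq52 + ((-1)*l + (-1)*l^3) * Eq53 + (1*l + 1*l^3) * Eq58 + (1 + 1*l^2) * Eq59)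
  have z27 : t12 = 0 := cancel_aux l _ (by linear_combination ((-1/2) + (-1/2)*l^2) * Eq19 + ((-1)*l + (-1)*l^3) * Eq24 + (1 + 1*l^2) * Eq29 + (1 + 1*l^2) * Eq51 + (1*l + 1*l^3) * Eq52 + ((-1) + (-1)*l^2) * Eq53 + (1 + 1*l^2) * Eq58)
  have z28 : (A12 0 0).re = 0 := cancel_aux l _ (by linear_combination ((-1/2) + (-1/2)*l^2) * Eq19 + (1 + 1*l^2) * Eq22)
  have z29 : (A12 0 0).im = 0 := cancel_aux l _ (by linear_combination ((-1/2)*l + (-1/2)*l^3) * Eq19 + (1 + 1*l^2) * Eq23 + ((-1) + (-2)*l^2 + (-1)*l^4) * Eq24 + (1 + 1*l^2) * Eq28 + (1*l + 1*l^3) * Eq29 + (1 + 1*l^2) * Eq50 + (1*l + 1*l^3) * Eq51 + (1 + 2*l^2 + 1*l^4) * Eq52 + ((-1)*l + (-1)*l^3) * Eq53 + (1*l + 1*l^3) * Eq58 + (1 + 1*l^2) * Eq59)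
  have z30 : (A12 0 1).re = 0 := cancel_aux l _ (by linear_combination (1 + 1*l^2) * Eq27 + (1 + 1*l^2) * Eq49 + (1 + 1*l^2) * Eq55 + ((-1) + (-1)*l^2) * Eq56)
  have z31 : (A12 0 1).im = 0 := cancel_aux l _ (by linear_combination ((-1) + (-1)*l^2) * Eq26 + ((-1) + (-1)*l^2) * Eq48 + ((-1) + (-1)*l^2) * Eq54 + ((-1)*l + (-1)*l^3) * Eq56 + ((-1) + (-1)*l^2) * Eq57)
  have z32 : (A12 1 0).re = 0 := cancel_aux l _ (by linear_combination (1 + 1*l^2) * Eq20 + ((-1) + (-1)*l^2) * Eq27 + ((-1) + (-1)*l^2) * Eq49 + ((-1) + (-1)*l^2) * Eq55 + (1 + 1*l^2) * Eq56)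
  have z33 : (A12 1 0).im = 0 := cancel_aux l _ (by linear_combination ((-1) + (-1)*l^2) * Eq21 + ((-1) + (-1)*l^2) * Eq26 + ((-1) + (-1)*l^2) * Eq48 + ((-1) + (-1)*l^2) * Eq54 + ((-1)*l + (-1)*l^3) * Eq56 + ((-1) + (-1)*l^2) * Eq57)
  have z34 : (A12 1 1).re = 0 := cancel_aux l _ (by linear_combination ((1/2) + (1/2)*l^2) * Eq19)
  have z35 : (A12 1 1).im = 0 := cancel_aux l _ (by linear_combination ((1/2)*l + (1/2)*l^3) * Eq19 + (1 + 2*l^2 + 1*l^4) * Eq24 + ((-1) + (-1)*l^2) * Eq28 + ((-1)*l + (-1)*l^3) * Eq29 + ((-1) + (-1)*l^2) * Eq50 + ((-1)*l + (-1)*l^3) * Eq51 + ((-1) + (-2)*l^2 + (-1)*l^4) * Eq52 + (1*l + 1*l^3) * Eq53 + ((-1)*l + (-1)*l^3) * Eq58 + ((-1) + (-1)*l^2) * Eq59)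
  have z36 : t13 = 0 := cancel_aux l _ (by linear_combination ((-1/2) + (-1/2)*l^2) * Eq24 + (1 + 1*l^2) * Eq52)
  have z37 : (A13 0 0).re = 0 := cancel_aux l _ (by linear_combination ((1/2) + (1/2)*l^2) * Eq24)
  have z38 : (A13 0 0).im = 0 := cancel_aux l _ (by linear_combination ((1/2)*l + (1/2)*l^3) * Eq24 + (1 + 1*l^2) * Eq53)
  have z39 : (A13 0 1).re = 0 := cancel_aux l _ (by linear_combination (1 + 1*l^2) * Eq26 + (1 + 1*l^2) * Eq54)
  have z40 : (A13 0 1).im = 0 := cancel_aux l _ (by linear_combination (1 + 1*l^2) * Eq27 + (1 + 1*l^2) * Eq55)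
  have z41 : (A13 1 0).re = 0 := cancel_aux l _ (by linear_combination ((-1) + (-1)*l^2) * Eq54)
  have z42 : (A13 1 0).im = 0 := cancel_aux l _ (by linear_combination (1 + 1*l^2) * Eq55)
  have z43 : (A13 1 1).re = 0 := cancel_aux l _ (by linear_combination ((-1/2) + (-1/2)*l^2) * Eq24 + (1 + 1*l^2) * Eq28)
  have z44 : (A13 1 1).im = 0 := cancel_aux l _ (by linear_combination ((-1/2)*l + (-1/2)*l^3) * Eq24 + (1 + 1*l^2) * Eq29 + ((-1) + (-1)*l^2) * Eq53)
  have z45 : t23 = 0 := cancel_aux l _ (by linear_combination ((-1/2) + (-1/2)*l^2) * Eq30 + (1 + 1*l^2) * Eq56)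
  have z46 : (A23 0 0).re = 0 := cancel_aux l _ (by linear_combination ((1/2) + (1/2)*l^2) * Eq30)
  have z47 : (A23 0 0).im = 0 := cancel_aux l _ (by linear_combination ((1/2)*l + (1/2)*l^3) * Eq30 + (1 + 1*l^2) * Eq57)
  have z48 : (A23 0 1).re = 0 := cancel_aux l _ (by linear_combination (1 + 1*l^2) * Eq32 + (1 + 1*l^2) * Eq58)
  have z49 : (A23 0 1).im = 0 := cancel_aux l _ (by linear_combination (1 + 1*l^2) * Eq33 + (1 + 1*l^2) * Eq59)
  have z50 : (A23 1 0).re = 0 := cancel_aux l _ (by linear_combination ((-1) + (-1)*l^2) * Eq58)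
  have z51 : (A23 1 0).im = 0 := cancel_aux l _ (by linear_combination (1 + 1*l^2) * Eq59)
  have z52 : (A23 1 1).re = 0 := cancel_aux l _ (by linear_combination ((-1/2) + (-1/2)*l^2) * Eq30 + (1 + 1*l^2) * Eq34)
  have z53 : (A23 1 1).im = 0 := cancel_aux l _ (by linear_combination ((-1/2)*l + (-1/2)*l^3) * Eq30 + (1 + 1*l^2) * Eq35 + ((-1) + (-1)*l^2) * Eq57)
  have hAz01 : A01 = 0 := by
    refine Matrix.ext ?_
    intro a b
    fin_cases a <;> fin_cases b
    · exact Complex.ext (by simpa using z1) (by simpa using z2)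
    · exact Complex.ext (by simpa using z3) (by simpa using z4)
    · exact Complex.ext (by simpa using z5) (by simpa using z6)
    · exact Complex.ext (by simpa using z7) (by simpa using z8)
  have hz01 : R (bv 0) (bv 1) = 0 := by
    rw [hE01, z0, hAz01]
    simp
  have hz10 : R (bv 1) (bv 0) = 0 := by
    rw [hanti (bv 0) (bv 1), hz01, neg_zero]
  have hAz02 : A02 = 0 := by
    refine Matrix.ext ?_
    intro a b
    fin_cases a <;> fin_cases b
    · exact Complex.ext (by simpa using z10) (by simpa using z11)
    · exact Complex.ext (by simpa using z12) (by simpa using z13)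
    · exact Complex.ext (by simpa using z14) (by simpa using z15)
    · exact Complex.ext (by simpa using z16) (by simpa using z17)
  have hz02 : R (bv 0) (bv 2) = 0 := by
    rw [hE02, z9, hAz02]
    simp
  have hz20 : R (bv 2) (bv 0) = 0 := by
    rw [hanti (bv 0) (bv 2), hz02, neg_zero]
  have hAz03 : A03 = 0 := by
    refine Matrix.ext ?_
    intro a b
    fin_cases a <;> fin_cases b
    · exact Complex.ext (by simpa using z19) (by simpa using z20)
    · exact Complex.ext (by simpa using z21) (by simpa using z22)
    · exact Complex.ext (by simpa using z23) (by simpa using z24)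
    · exact Complex.ext (by simpa using z25) (by simpa using z26)
  have hz03 : R (bv 0) (bv 3) = 0 := by
    rw [hE03, z18, hAz03]
    simp
  have hz30 : R (bv 3) (bv 0) = 0 := by
    rw [hanti (bv 0) (bv 3), hz03, neg_zero]
  have hAz12 : A12 = 0 := by
    refine Matrix.ext ?_
    intro a b
    fin_cases a <;> fin_cases b
    · exact Complex.ext (by simpa using z28) (by simpa using z29)
    · exact Complex.ext (by simpa using z30) (by simpa using z31)
    · exact Complex.ext (by simpa using z32) (by simpa using z33)
    · exact Complex.ext (by simpa using z34) (by simpa using z35)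
  have hz12 : R (bv 1) (bv 2) = 0 := by
    rw [hE12, z27, hAz12]
    simp
  have hz21 : R (bv 2) (bv 1) = 0 := by
    rw [hanti (bv 1) (bv 2), hz12, neg_zero]
  have hAz13 : A13 = 0 := by
    refine Matrix.ext ?_
    intro a b
    fin_cases a <;> fin_cases b
    · exact Complex.ext (by simpa using z37) (by simpa using z38)
    · exact Complex.ext (by simpa using z39) (by simpa using z40)
    · exact Complex.ext (by simpa using z41) (by simpa using z42)
    · exact Complex.ext (by simpa using z43) (by simpa using z44)
  have hz13 : R (bv 1) (bv 3) = 0 := by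
    rw [hE13, z36, hAz13]
    simp
  have hz31 : R (bv 3) (bv 1) = 0 := by
    rw [hanti (bv 1) (bv 3), hz13, neg_zero]
  have hAz23 : A23 = 0 := by
    refine Matrix.ext ?_
    intro a b
    fin_cases a <;> fin_cases b
    · exact Complex.ext (by simpa using z46) (by simpa using z47)
    · exact Complex.ext (by simpa using z48) (by simpa using z49)
    · exact Complex.ext (by simpa using z50) (by simpa using z51)
    · exact Complex.ext (by simpa using z52) (by simpa using z53)
  have hz23 : R (bv 2) (bv 3) = 0 := by
    rw [hE23, z45, hAz23]
    simp
  have hz32 : R (bv 3) (bv 2) = 0 := by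
    rw [hanti (bv 2) (bv 3), hz23, neg_zero]
  have hzAll : ∀ a b : Fin 4, R (bv a) (bv b) = 0 := by
    intro a b
    fin_cases a <;> fin_cases b <;>
      first | exact hR1 _ | exact hz01 | exact hz10 | exact hz02 | exact hz20 | exact hz03 | exact hz30 | exact hz12 | exact hz21 | exact hz13 | exact hz31 | exact hz23 | exact hz32
  apply LinearMap.ext; intro x; apply LinearMap.ext; intro y
  rw [bv_span x, bv_span y]
  simp only [map_add, map_smul, LinearMap.add_apply, LinearMap.smul_apply,
    hzAll, smul_zero, add_zero, zero_add, LinearMap.zero_apply]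
/-- For every real `λ`, the Lie algebra `𝔧_λ` of
`J_λ·SU(2) ⊂ GL(2,ℂ)` has `dim K(𝔧_λ) = 8`. -/
theorem finrank_Kspace_jlam (l : ℝ) :
    Module.finrank ℝ ↥(Kspace (jlam l)) = 8 := by
  let piK : ↥(Kspace (jlam l)) →ₗ[ℝ] (Fin 8 → ℝ) :=
    (coordF l).comp (Kspace (jlam l)).subtype
  have hinj : Function.Injective piK := by
    intro u v huv
    have h0 : piK (u - v) = 0 := by rw [map_sub, huv, sub_self]
    have e : ((u - v : ↥(Kspace (jlam l))) : (Fin 2 → ℂ) →ₗ[ℝ] (Fin 2 → ℂ) →ₗ[ℝ]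
        Module.End ℝ (Fin 2 → ℂ)) = 0 :=
      coordF_inj l _ (u - v).2 (by simpa [piK] using h0)
    have e2 : u - v = 0 := Subtype.ext e
    exact sub_eq_zero.mp e2
  have hsurj : Function.Surjective piK := by
    intro v
    refine ⟨⟨sol l (v 0) (v 1) (v 2) (v 3) (v 4) (v 5) (v 6) (v 7),
      sol_mem_Kspace l (v 0) (v 1) (v 2) (v 3) (v 4) (v 5) (v 6) (v 7)⟩, ?_⟩
    show coordF l (sol l (v 0) (v 1) (v 2) (v 3) (v 4) (v 5) (v 6) (v 7)) = v
    rw [coordF_sol]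
    funext i
    fin_cases i <;> rfl
  have eqv := LinearEquiv.ofBijective piK ⟨hinj, hsurj⟩
  rw [eqv.finrank_eq]
  simp

end
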